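/- For any fixed compatibility scenarios Υ_in and Υ_out, the set NCW(Υ_in → Υ_out) is a convex polytope: there are finitely many deterministic noncontextual wirings W_1, …, W_N ∈ NCW(Υ_in → Υ_out) such that a map T on behaviors belongs to NCW(Υ_in → Υ_out) if and only if there exist weights c_1, …, c_N ≥ 0 with Σ_j c_j = 1 and T(B) = Σ_j c_j W_j(B) (contextwise) for every nondisturbing behavior B on Υ_in. -/

import Mathlib

noncomputable section

/-- A compatibility scenario: a finite set of measurements `M`, finite nonempty
outcome sets `O x` for each measurement, and an antichain `C` of maximal contexts. -/
structure Scenario where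
  M : Type
  [fintypeM : Fintype M]
  [decEqM : DecidableEq M]
  O : M → Type
  [fintypeO : ∀ x, Fintype (O x)]
  [decEqO : ∀ x, DecidableEq (O x)]
  [nonemptyO : ∀ x, Nonempty (O x)]
  C : Finset (Finset M)
  antichain : ∀ γ ∈ C, ∀ γ' ∈ C, γ ⊆ γ' → γ = γ'

attribute [instance] Scenario.fintypeM Scenario.decEqM Scenario.fintypeO
  Scenario.decEqO Scenario.nonemptyO

/-- The elements of a set of measurements, as a type. -/
def Scenario.El (S : Scenario) (γ : Finset S.M) : Type := {x : S.M // x ∈ γ}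

instance (S : Scenario) (γ : Finset S.M) : Fintype (S.El γ) :=
  show Fintype {x : S.M // x ∈ γ} from inferInstance

instance (S : Scenario) (γ : Finset S.M) : DecidableEq (S.El γ) :=
  show DecidableEq {x : S.M // x ∈ γ} from inferInstance

/-- Joint outcomes `O^γ` of a set of measurements `γ`. -/
def Scenario.JO (S : Scenario) (γ : Finset S.M) : Type := (x : S.El γ) → S.O x.1

instance (S : Scenario) (γ : Finset S.M) : Fintype (S.JO γ) :=
  show Fintype ((x : S.El γ) → S.O x.1) from inferInstance

instance (S : Scenario) (γ : Finset S.M) : DecidableEq (S.JO γ) :=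
  show DecidableEq ((x : S.El γ) → S.O x.1) from inferInstance

instance (S : Scenario) (γ : Finset S.M) : Nonempty (S.JO γ) :=
  ⟨fun _ => Classical.arbitrary _⟩

/-- Global outcome assignments `O^M`. -/
abbrev Scenario.Glob (S : Scenario) : Type := (x : S.M) → S.O x

/-- Restriction of a global assignment to a set of measurements. -/
def Scenario.restr (S : Scenario) (γ : Finset S.M) (o : S.Glob) : S.JO γ :=
  fun x => o x.1

/-- The (maximal) contexts of a scenario. -/
def Scenario.Ctx (S : Scenario) : Type := {γ : Finset S.M // γ ∈ S.C}

instance (S : Scenario) : Fintype S.Ctx :=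
  show Fintype {γ : Finset S.M // γ ∈ S.C} from inferInstance

instance (S : Scenario) : DecidableEq S.Ctx :=
  show DecidableEq {γ : Finset S.M // γ ∈ S.C} from inferInstance

/-- A behavior (box): a family of real-valued functions, one for each maximal context. -/
def Behavior (S : Scenario) : Type := (γ : S.Ctx) → S.JO γ.1 → ℝ

/-- The family forms a probability distribution on each maximal context. -/
def IsProb (S : Scenario) (B : Behavior S) : Prop :=
  ∀ γ : S.Ctx, (∀ t, 0 ≤ B γ t) ∧ (∑ t, B γ t = 1)

/-- Kochen–Specker noncontextuality: existence of a global section, i.e. a probability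
distribution on `O^M` whose marginal on each maximal context equals the behavior. -/
def IsNC (S : Scenario) (B : Behavior S) : Prop :=
  ∃ pM : S.Glob → ℝ, (∀ o, 0 ≤ pM o) ∧ (∑ o, pM o = 1) ∧
    ∀ (γ : S.Ctx) (t : S.JO γ.1),
      B γ t = ∑ o : S.Glob, if S.restr γ.1 o = t then pM o else 0

/-- Restriction between nested sets of measurements. -/
def Scenario.restr2 (S : Scenario) {γ δ : Finset S.M} (h : δ ⊆ γ) (t : S.JO γ) :
    S.JO δ := fun x => t ⟨x.1, h x.2⟩

/-- The no-disturbance condition: marginals agree on intersections of contexts. -/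
def IsND (S : Scenario) (B : Behavior S) : Prop :=
  ∀ γ γ' : S.Ctx, ∀ u : S.JO (γ.1 ∩ γ'.1),
    (∑ t : S.JO γ.1, if S.restr2 Finset.inter_subset_left t = u then B γ t else 0) =
      (∑ t : S.JO γ'.1, if S.restr2 Finset.inter_subset_right t = u then B γ' t else 0)

/-- Factorizability: a noncontextual (hidden-variable) factorizable model. -/
def IsFactorizable (S : Scenario) (B : Behavior S) : Prop :=
  ∃ (k : ℕ) (q : Fin k → ℝ) (e : (x : S.M) → Fin k → S.O x → ℝ),
    (∀ l, 0 ≤ q l) ∧ (∑ l, q l = 1) ∧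
    (∀ x l, (∀ o, 0 ≤ e x l o) ∧ (∑ o, e x l o = 1)) ∧
    ∀ (γ : S.Ctx) (t : S.JO γ.1),
      B γ t = ∑ l, q l * ∏ x : S.El γ.1, e x.1 l (t x)

/-- The deterministic behavior induced by a global outcome assignment. -/
def detB (S : Scenario) (o : S.Glob) : Behavior S :=
  fun γ t => if S.restr γ.1 o = t then 1 else 0
/-- A noncontextual wiring with input scenario `S`, whose output scenario has the
measurements, maximal contexts and outcome sets of `T`.  It consists of a
noncontextual pre-processing behavior (given by its global section `pPre` on the
pre-processing outcome sets `OPre`), a function `f` selecting, from each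
pre-processing context `β` and joint outcome `r`, a context of the input scenario,
a coordinatewise wiring `wmap` feeding every output measurement slot from a single
input measurement, and adaptively chosen noncontextual (factorizable)
post-processing boxes given by a hidden variable `φ` with distribution `q β r`
and response functions `resp`. -/
structure Wiring (S T : Scenario) where
  OPre : T.M → Type
  [fintypeOPre : ∀ m, Fintype (OPre m)]
  [decEqOPre : ∀ m, DecidableEq (OPre m)]
  [nonemptyOPre : ∀ m, Nonempty (OPre m)]
  pPre : ((x : T.M) → OPre x) → ℝ
  pPre_nonneg : ∀ o, 0 ≤ pPre o
  pPre_sum : ∑ o, pPre o = 1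
  f : (β : T.Ctx) → ((x : T.El β.1) → OPre x.1) → S.Ctx
  wmap : (β : T.Ctx) → (r : (x : T.El β.1) → OPre x.1) → T.El β.1 → S.El (f β r).1
  nPhi : (β : T.Ctx) → ((x : T.El β.1) → OPre x.1) → ℕ
  q : (β : T.Ctx) → (r : (x : T.El β.1) → OPre x.1) → Fin (nPhi β r) → ℝ
  q_nonneg : ∀ β r φ, 0 ≤ q β r φ
  q_sum : ∀ β r, ∑ φ, q β r φ = 1
  resp : (β : T.Ctx) → (r : (x : T.El β.1) → OPre x.1) → (m : T.El β.1) →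
    Fin (nPhi β r) → S.O (wmap β r m).1 → T.O m.1 → ℝ
  resp_nonneg : ∀ β r m φ o u, 0 ≤ resp β r m φ o u
  resp_sum : ∀ β r m φ o, ∑ u, resp β r m φ o u = 1

attribute [instance] Wiring.fintypeOPre Wiring.decEqOPre Wiring.nonemptyOPre

/-- Marginal of the pre-processing behavior on a pre-processing context. -/
def Wiring.preB {S T : Scenario} (W : Wiring S T) (β : T.Ctx)
    (r : (x : T.El β.1) → W.OPre x.1) : ℝ :=
  ∑ o : (x : T.M) → W.OPre x,
    if (fun x : T.El β.1 => o x.1) = r then W.pPre o else 0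

/-- The wired behavior `W(B)` on the output scenario. -/
def Wiring.apply {S T : Scenario} (W : Wiring S T) (B : Behavior S) : Behavior T :=
  fun β t =>
    ∑ r : (x : T.El β.1) → W.OPre x.1,
      ∑ s : S.JO (W.f β r).1,
        W.preB β r * B (W.f β r) s *
          ∑ φ : Fin (W.nPhi β r),
            W.q β r φ * ∏ m : T.El β.1, W.resp β r m φ (s (W.wmap β r m)) (t m)

/-- Free convertibility of behaviors on a scenario by noncontextual wirings (whose
output scenario has the same maximal contexts and context-outcome sets). -/
def Arrow (S : Scenario) (B B' : Behavior S) : Prop :=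
  ∃ W : Wiring S S, W.apply B = B'
/-- A noncontextual wiring is deterministic if its pre-processing behavior and all its
post-processing behaviors are deterministic: the global section of the pre-processing
behavior is `{0,1}`-valued, the post-processing boxes have a single hidden-variable
value, and their response functions are `{0,1}`-valued. -/
def Wiring.IsDeterministic {S T : Scenario} (W : Wiring S T) : Prop :=
  (∀ o, W.pPre o = 0 ∨ W.pPre o = 1) ∧
  (∀ β r, W.nPhi β r = 1) ∧
  (∀ β r m φ o u, W.resp β r m φ o u = 0 ∨ W.resp β r m φ o u = 1)

/-!
Conditioned on the pre-processing outcome `o`, a wiring acts on an output context `β` by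
choosing an input context, a coordinatewise map of measurements and, through its hidden
variable, a random family of deterministic response functions; the latter is distributed as
the product of the response kernels. These choices are made independently for the different
output contexts, and the output at `β` depends only on the choice made at `β`. Hence `W(B)` is
the average, over the joint law of all the choices, of the deterministic wirings they define,
and there are only finitely many of those. Conversely, a convex combination `∑ c_j W_j` of
deterministic wirings is itself a wiring: the pre-processing box announces the same label `j`,
with probability `c_j`, at every measurement, and each output context then runs `W_j`.
-/

open Finset

section ProductWeights

variable {ι : Type} [Fintype ι] [DecidableEq ι] {κ : ι → Type} [∀ i, Fintype (κ i)]

theorem sum_pi_prod_eq_one (p : ∀ i, κ i → ℝ) (hp : ∀ i, ∑ j, p i j = 1) :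
    ∑ g : ∀ i, κ i, ∏ i, p i (g i) = 1 := by
  rw [← Fintype.prod_sum]
  simp [hp]

theorem sum_pi_prod_mul_apply (p : ∀ i, κ i → ℝ) (hp : ∀ i, ∑ j, p i j = 1) (i₀ : ι)
    (A : κ i₀ → ℝ) :
    ∑ g : ∀ i, κ i, (∏ i, p i (g i)) * A (g i₀) = ∑ j, p i₀ j * A j := by
  rw [← (Equiv.piSplitAt i₀ κ).symm.sum_comp, Fintype.sum_prod_type]
  refine sum_congr rfl fun j _ => ?_
  have h_rest (x : ∀ i : {i // i ≠ i₀}, κ i) (i : {i // i ≠ i₀}) :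
      (Equiv.piSplitAt i₀ κ).symm (j, x) i = x i := dif_neg i.2
  simp only [Fintype.prod_eq_mul_prod_subtype_ne _ i₀, h_rest]
  simp only [Equiv.piSplitAt_symm_apply, dite_true]
  rw [← sum_mul, ← mul_sum, sum_pi_prod_eq_one (fun i : {i // i ≠ i₀} => p i) (fun i => hp i),
    mul_one]

variable {α μ : ι → Type} [∀ i, Fintype (α i)] [∀ i, DecidableEq (α i)] [∀ i, Fintype (μ i)]

theorem sum_pi_kernel_eq_one (p : ∀ i, α i → μ i → ℝ) (hp : ∀ i a, ∑ b, p i a b = 1) :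
    ∑ g : ∀ i, α i → μ i, ∏ i, ∏ a, p i a (g i a) = 1 := by
  rw [← Fintype.prod_sum fun i (gi : α i → μ i) => ∏ a, p i a (gi a)]
  simp [← Fintype.prod_sum, hp]

theorem sum_pi_kernel_mul_prod_ite_eq [∀ i, DecidableEq (μ i)] (p : ∀ i, α i → μ i → ℝ)
    (hp : ∀ i a, ∑ b, p i a b = 1) (x : ∀ i, α i) (y : ∀ i, μ i) :
    ∑ g : ∀ i, α i → μ i, (∏ i, ∏ a, p i a (g i a)) * ∏ i, (if g i (x i) = y i then 1 else 0) =
      ∏ i, p i (x i) (y i) := by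
  simp_rw [← prod_mul_distrib]
  rw [← Fintype.prod_sum fun i (gi : α i → μ i) =>
    (∏ a, p i a (gi a)) * if gi (x i) = y i then 1 else 0]
  refine prod_congr rfl fun i _ => ?_
  rw [sum_pi_prod_mul_apply (κ := fun _ => μ i) (p i) (hp i) (x i)
    fun b => if b = y i then 1 else 0]
  simp

end ProductWeights

section DeterministicWirings

/-- What a deterministic wiring does at the output context `β`: read the input context `γ`,
feed output slot `m` from input measurement `w m`, and relabel outcomes by a function. -/
abbrev LocalDetData (S T : Scenario) (β : T.Ctx) : Type :=
  Σ γ : S.Ctx, Σ w : T.El β.1 → S.El γ.1, (m : T.El β.1) → S.O (w m).1 → T.O m.1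

abbrev DetData (S T : Scenario) : Type := (β : T.Ctx) → LocalDetData S T β

variable {S T : Scenario}

def LocalDetData.apply {β : T.Ctx} (e : LocalDetData S T β) (B : Behavior S)
    (t : T.JO β.1) : ℝ :=
  ∑ s : S.JO e.1.1, B e.1 s * ∏ m : T.El β.1, if e.2.2 m (s (e.2.1 m)) = t m then 1 else 0

theorem LocalDetData.apply_of_isEmpty {β : T.Ctx} [IsEmpty (T.El β.1)] {B : Behavior S}
    (hB : IsProb S B) (e : LocalDetData S T β) (t : T.JO β.1) : e.apply B t = 1 := by
  simp [LocalDetData.apply, (hB e.1).2]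

/-- An empty output context sees no pre-processing outcome and falls back to an arbitrary branch;
this is harmless because every branch then outputs the total mass `1` of `B`. -/
def selectBranch {J : Type} [Nonempty J] (β : T.Ctx) (r : T.El β.1 → J) : J :=
  if h : (univ : Finset (T.El β.1)).Nonempty then r h.choose else Classical.arbitrary J

def Wiring.ofMixture {J : Type} [Fintype J] [DecidableEq J] [Nonempty J] (c : J → ℝ)
    (hc0 : ∀ j, 0 ≤ c j) (hc1 : ∑ j, c j = 1) (d : J → DetData S T) : Wiring S T where
  OPre _ := J
  pPre o := ∑ j, if (fun _ => j) = o then c j else 0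
  pPre_nonneg o := sum_nonneg fun j _ => by split <;> simp [hc0]
  pPre_sum := by rw [sum_comm]; simpa using hc1
  f β r := (d (selectBranch β r) β).1
  wmap β r := (d (selectBranch β r) β).2.1
  nPhi _ _ := 1
  q _ _ _ := 1
  q_nonneg _ _ _ := zero_le_one
  q_sum _ _ := by simp
  resp β r m _ a u := if (d (selectBranch β r) β).2.2 m a = u then 1 else 0
  resp_nonneg _ _ _ _ _ _ := by split <;> simp
  resp_sum _ _ _ _ _ := by simp

section Mixture

variable {J : Type} [Fintype J] [DecidableEq J] [Nonempty J] {c : J → ℝ} (hc0 : ∀ j, 0 ≤ c j)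
  (hc1 : ∑ j, c j = 1) (d : J → DetData S T)

theorem Wiring.ofMixture_preB (β : T.Ctx) (r : T.El β.1 → J) :
    (Wiring.ofMixture c hc0 hc1 d).preB β r = ∑ j, if (fun _ => j) = r then c j else 0 := by
  show ∑ o : T.M → J, (if (fun x : T.El β.1 => o x.1) = r then
    ∑ j, (if (fun _ => j) = o then c j else 0) else 0) = _
  simp only [ite_sum_zero]
  rw [sum_comm]
  refine sum_congr rfl fun j _ => ?_
  simp_rw [← ite_and, and_comm (a := _ = r), ite_and]
  rw [sum_ite_eq]
  simp

theorem Wiring.ofMixture_apply {B : Behavior S} (hB : IsProb S B) (β : T.Ctx) (t : T.JO β.1) :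
    (Wiring.ofMixture c hc0 hc1 d).apply B β t = ∑ j, c j * (d j β).apply B t := by
  have h_branch : (Wiring.ofMixture c hc0 hc1 d).apply B β t = ∑ r : T.El β.1 → J,
      (Wiring.ofMixture c hc0 hc1 d).preB β r * (d (selectBranch β r) β).apply B t := by
    refine sum_congr rfl fun r _ => ?_
    simp only [LocalDetData.apply, mul_sum, mul_assoc]
    refine sum_congr rfl fun s _ => ?_
    simp only [Wiring.ofMixture, one_mul]
    exact Fin.sum_univ_one _
  simp only [h_branch, ofMixture_preB, sum_mul, ite_mul, zero_mul]
  rw [sum_comm]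
  refine sum_congr rfl fun j _ => ?_
  rw [sum_ite_eq, if_pos (mem_univ _)]
  by_cases h : (univ : Finset (T.El β.1)).Nonempty
  · rw [selectBranch, dif_pos h]
  · rw [not_nonempty_iff_eq_empty, univ_eq_empty_iff] at h
    rw [LocalDetData.apply_of_isEmpty hB, LocalDetData.apply_of_isEmpty hB]

end Mixture

def Wiring.ofDetData (d : DetData S T) : Wiring S T :=
  Wiring.ofMixture (J := Unit) (fun _ => 1) (fun _ => zero_le_one) (by simp) fun _ => d

theorem Wiring.ofDetData_isDeterministic (d : DetData S T) :
    (Wiring.ofDetData d).IsDeterministic := by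
  refine ⟨fun o => Or.inr ?_, fun _ _ => rfl, fun β r m φ a u => ?_⟩
  · simp only [Wiring.ofDetData, Wiring.ofMixture]
    rw [Fintype.sum_unique]
    exact if_pos rfl -- by eta for `Unit`
  · simp only [Wiring.ofDetData, Wiring.ofMixture]
    split <;> simp

theorem Wiring.ofDetData_apply (d : DetData S T) {B : Behavior S} (hB : IsProb S B)
    (β : T.Ctx) (t : T.JO β.1) : (Wiring.ofDetData d).apply B β t = (d β).apply B t := by
  simp [Wiring.ofDetData, Wiring.ofMixture_apply _ _ _ hB]

end DeterministicWirings

namespace Wiring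

variable {S T : Scenario} (W : Wiring S T)

theorem sum_preB_mul (β : T.Ctx) (G : ((x : T.El β.1) → W.OPre x.1) → ℝ) :
    ∑ r, W.preB β r * G r = ∑ o : (x : T.M) → W.OPre x, W.pPre o * G (fun x => o x.1) := by
  simp only [preB, sum_mul, ite_mul, zero_mul]
  rw [sum_comm]
  exact sum_congr rfl fun o _ => by rw [sum_ite_eq, if_pos (mem_univ _)]

def responseWeight (β : T.Ctx) (r : (x : T.El β.1) → W.OPre x.1) (φ : Fin (W.nPhi β r))
    (g : (m : T.El β.1) → S.O (W.wmap β r m).1 → T.O m.1) : ℝ :=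
  ∏ m, ∏ a, W.resp β r m φ a (g m a)

/-- The law of the deterministic data used at `β` given the local pre-processing outcome `r`:
the image of `q ⊗ responseWeight` under `g ↦ ⟨f r, wmap r, g⟩`. -/
def localDetProb (β : T.Ctx) (r : (x : T.El β.1) → W.OPre x.1) (e : LocalDetData S T β) :
    ℝ :=
  ∑ φ, ∑ g, if (⟨W.f β r, W.wmap β r, g⟩ : LocalDetData S T β) = e then
    W.q β r φ * W.responseWeight β r φ g else 0

theorem localDetProb_nonneg (β : T.Ctx) (r : (x : T.El β.1) → W.OPre x.1)
    (e : LocalDetData S T β) : 0 ≤ W.localDetProb β r e :=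
  sum_nonneg fun φ _ => sum_nonneg fun g _ => by
    split
    · exact mul_nonneg (W.q_nonneg β r φ)
        (prod_nonneg fun m _ => prod_nonneg fun a _ => W.resp_nonneg β r m φ a _)
    · exact le_rfl

theorem sum_localDetProb_mul (β : T.Ctx) (r : (x : T.El β.1) → W.OPre x.1)
    (A : LocalDetData S T β → ℝ) :
    ∑ e, W.localDetProb β r e * A e =
      ∑ φ, ∑ g, W.q β r φ * W.responseWeight β r φ g * A ⟨W.f β r, W.wmap β r, g⟩ := by
  simp only [localDetProb, sum_mul, ite_mul, zero_mul]
  rw [sum_comm]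
  refine sum_congr rfl fun φ _ => ?_
  rw [sum_comm]
  exact sum_congr rfl fun g _ => by rw [sum_ite_eq, if_pos (mem_univ _)]

theorem sum_localDetProb (β : T.Ctx) (r : (x : T.El β.1) → W.OPre x.1) :
    ∑ e, W.localDetProb β r e = 1 := by
  have h := W.sum_localDetProb_mul β r fun _ => 1
  simp only [mul_one, ← mul_sum] at h
  rw [h, ← W.q_sum β r]
  refine sum_congr rfl fun φ _ => ?_
  simp only [responseWeight]
  rw [sum_pi_kernel_eq_one _ (W.resp_sum β r · φ), mul_one]

theorem sum_localDetProb_mul_apply (B : Behavior S) (β : T.Ctx)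
    (r : (x : T.El β.1) → W.OPre x.1) (t : T.JO β.1) :
    ∑ e, W.localDetProb β r e * e.apply B t =
      ∑ s, B (W.f β r) s *
        ∑ φ, W.q β r φ * ∏ m, W.resp β r m φ (s (W.wmap β r m)) (t m) := by
  have h_kernel (φ : Fin (W.nPhi β r)) (s : S.JO (W.f β r).1) :
      ∑ g, W.responseWeight β r φ g * ∏ m, (if g m (s (W.wmap β r m)) = t m then 1 else 0) =
        ∏ m, W.resp β r m φ (s (W.wmap β r m)) (t m) :=
    sum_pi_kernel_mul_prod_ite_eq _ (W.resp_sum β r · φ) _ t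
  calc ∑ e, W.localDetProb β r e * e.apply B t
      = ∑ φ, ∑ s, W.q β r φ * B (W.f β r) s *
          ∑ g, W.responseWeight β r φ g *
            ∏ m, (if g m (s (W.wmap β r m)) = t m then 1 else 0) := by
        rw [sum_localDetProb_mul]
        simp only [LocalDetData.apply, mul_sum]
        refine sum_congr rfl fun φ _ => ?_
        rw [sum_comm]
        exact sum_congr rfl fun s _ => sum_congr rfl fun g _ => by ring
    _ = _ := by
        simp only [h_kernel, mul_sum]
        rw [sum_comm]
        exact sum_congr rfl fun s _ => sum_congr rfl fun φ _ => by ring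

def detWeight (d : DetData S T) : ℝ :=
  ∑ o : (x : T.M) → W.OPre x, W.pPre o * ∏ β, W.localDetProb β (fun x => o x.1) (d β)

theorem detWeight_nonneg (d : DetData S T) : 0 ≤ W.detWeight d :=
  sum_nonneg fun o _ => mul_nonneg (W.pPre_nonneg o)
    (prod_nonneg fun β _ => W.localDetProb_nonneg β _ (d β))

theorem sum_detWeight : ∑ d, W.detWeight d = 1 := by
  simp only [detWeight]
  rw [sum_comm, ← W.pPre_sum]
  refine sum_congr rfl fun o _ => ?_
  rw [← mul_sum, sum_pi_prod_eq_one _ fun β => W.sum_localDetProb β _, mul_one]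

theorem apply_eq_sum_detWeight_mul (B : Behavior S) (β : T.Ctx) (t : T.JO β.1) :
    W.apply B β t = ∑ d, W.detWeight d * (d β).apply B t :=
  calc W.apply B β t
      = ∑ r, W.preB β r * ∑ s, B (W.f β r) s *
          ∑ φ, W.q β r φ * ∏ m, W.resp β r m φ (s (W.wmap β r m)) (t m) := by
        simp only [Wiring.apply, mul_sum, mul_assoc]
    _ = ∑ o : (x : T.M) → W.OPre x, W.pPre o *
          ∑ e, W.localDetProb β (fun x => o x.1) e * e.apply B t := by
        simp only [sum_preB_mul, sum_localDetProb_mul_apply]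
    _ = ∑ o : (x : T.M) → W.OPre x, W.pPre o *
          ∑ d : DetData S T, (∏ β', W.localDetProb β' (fun x => o x.1) (d β')) *
            (d β).apply B t := by
        refine sum_congr rfl fun o _ => congrArg _ ?_
        exact (sum_pi_prod_mul_apply (κ := LocalDetData S T)
          (fun β' => W.localDetProb β' (fun x => o x.1)) (fun β' => W.sum_localDetProb β' _) β
          fun e => e.apply B t).symm
    _ = ∑ d, W.detWeight d * (d β).apply B t := by
        simp only [detWeight, mul_sum, sum_mul, mul_assoc]
        exact sum_comm

end Wiring

/-- `NCW(Υ_in → Υ_out)` is a convex polytope: there are finitely many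
deterministic noncontextual wirings `W_1, …, W_N` such that a map on behaviors is
induced by a noncontextual wiring iff it is a convex combination of the maps induced by
`W_1, …, W_N` (on nondisturbing behaviors). -/
theorem statement_11 (S T : Scenario) :
    ∃ (N : ℕ) (Ws : Fin N → Wiring S T), (∀ j, (Ws j).IsDeterministic) ∧
      ∀ F : Behavior S → Behavior T,
        (∃ W : Wiring S T, ∀ B : Behavior S, IsProb S B → IsND S B → F B = W.apply B) ↔
        (∃ c : Fin N → ℝ, (∀ j, 0 ≤ c j) ∧ (∑ j, c j = 1) ∧
          ∀ B : Behavior S, IsProb S B → IsND S B →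
            ∀ (β : T.Ctx) (t : T.JO β.1), F B β t = ∑ j, c j * (Ws j).apply B β t) := by
  let d := (Fintype.equivFin (DetData S T)).symm
  refine ⟨_, fun j => Wiring.ofDetData (d j), fun j => Wiring.ofDetData_isDeterministic _,
    fun F => ⟨?_, ?_⟩⟩
  · rintro ⟨W, hW⟩
    refine ⟨fun j => W.detWeight (d j), fun j => W.detWeight_nonneg _,
      by rw [d.sum_comp W.detWeight, W.sum_detWeight], fun B hB hND β t => ?_⟩
    simp only [hW B hB hND, W.apply_eq_sum_detWeight_mul, Wiring.ofDetData_apply _ hB]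
    exact (d.sum_comp fun e => W.detWeight e * (e β).apply B t).symm
  · rintro ⟨c, hc0, hc1, hF⟩
    have : Nonempty (Fin (Fintype.card (DetData S T))) := by
      by_contra h
      rw [not_nonempty_iff, ← univ_eq_empty_iff] at h
      rw [h, sum_empty] at hc1
      exact zero_ne_one hc1
    refine ⟨Wiring.ofMixture c hc0 hc1 d, fun B hB hND => funext fun β => funext fun t => ?_⟩
    simp only [hF B hB hND, Wiring.ofMixture_apply _ _ _ hB, Wiring.ofDetData_apply _ hB]
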